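/- Under the right-spinor matrix representation, the automorphism β (fixing all eᵢ and negating all ẽᵢ) satisfies the recursive block formula: β of the matrix [[a₀⁺, α(a₁⁺)], [a₁⁻, α(a₀⁻)]] equals [[β(a₀⁻), αβ(a₁⁻)], [β(a₁⁺), αβ(a₀⁺)]]; i.e., β exchanges the 2×2 blocks (swapping both rows and columns), applies α to each block, and then β to each block recursively. -/
import Mathlib


open CliffordAlgebra

/-- For the automorphism `β` (fixing `e`, negating `f = ẽ`,
and preserving the subalgebra `S`), `β` of the matrix
`[[a₀⁺, α(a₁⁺)], [a₁⁻, α(a₀⁻)]]` is `[[β(a₀⁻), αβ(a₁⁻)], [β(a₁⁺), αβ(a₀⁺)]]`: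
blocks are exchanged and `β` is applied to each block, i.e. `β(a)` has the
decomposition written below. -/
theorem stmt17 {K V : Type*} [Field K] [AddCommGroup V] [Module K V]
    (hK : (2 : K) ≠ 0) (Q : QuadraticForm K V) (e f : V)
    (he : Q e = 1) (hf : Q f = -1) (horth : QuadraticMap.polar Q e f = 0)
    (S : Subalgebra K (CliffordAlgebra Q))
    (hS : S = Algebra.adjoin K (ι Q '' 
      {v : V | QuadraticMap.polar Q v e = 0 ∧ QuadraticMap.polar Q v f = 0}))
    (E T Pp Pm : CliffordAlgebra Q)
    (hE : E = ι Q e) (hT : T = ι Q f)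
    (hPp : Pp = (2 : K)⁻¹ • (1 + T * E)) (hPm : Pm = (2 : K)⁻¹ • (1 - T * E))
    (a0p a1p a0m a1m : CliffordAlgebra Q)
    (ha0p : a0p ∈ S) (ha1p : a1p ∈ S) (ha0m : a0m ∈ S) (ha1m : a1m ∈ S)
    (a : CliffordAlgebra Q)
    (ha : a = Pp * a0p + Pp * E * a1p + Pm * a0m + Pm * E * a1m)
    (β : CliffordAlgebra Q ≃ₐ[K] CliffordAlgebra Q)
    (hβe : β (ι Q e) = ι Q e) (hβf : β (ι Q f) = -ι Q f)
    (hβS : ∀ x ∈ S, β x ∈ S) :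
    β a = Pp * β a0m + Pp * E * β a1m + Pm * β a0p + Pm * E * β a1p := by
  subst ha hPp hPm hE hT
  simp only [map_add, map_mul, map_smul, map_one, map_sub, hβe, hβf]
  simp only [neg_mul, sub_neg_eq_add, ← sub_eq_add_neg]
  abel
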